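/- Let 1<p<∞, let I be an arc of the unit circle, and define φ_h(z) = (1/h)∫_{S_{I,h}} (1−|λ|²)^{p−1}/|1−conj(λ)z|^p dA(λ), where dA is planar area measure. There exists a constant C>0 depending only on p such that φ_h(z) ≤ C for every arc I, every h>0, and every z in the closed unit disk. -/

import Mathlib

open MeasureTheory Complex Set Metric

noncomputable section

/-- The `p`-th power mean of `f` on the circle of radius `r` (normalized by `2π`). -/
def hIntegral (p : ℝ) (f : ℂ → ℂ) (r : ℝ) : ℝ :=
  (1 / (2 * Real.pi)) *
    ∫ θ in (0:ℝ)..(2 * Real.pi), ‖f ((r : ℂ) * Complex.exp (θ * Complex.I))‖ ^ p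

/-- `‖f‖_p ^ p`, the `p`-th power of the Hardy space `H^p` norm. -/
def hNormPow (p : ℝ) (f : ℂ → ℂ) : ℝ := sSup (hIntegral p f '' Ioo (0:ℝ) 1)

/-- The Hardy space `H^p` norm. -/
def hNorm (p : ℝ) (f : ℂ → ℂ) : ℝ := hNormPow p f ^ (1 / p)

/-- `f` has finite `H^p` norm. -/
def HpFinite (p : ℝ) (f : ℂ → ℂ) : Prop := BddAbove (hIntegral p f '' Ioo (0:ℝ) 1)

/-- The `H^p` reproducing kernel `k_λ(z) = 1/(1 - conj(λ) z)`. -/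
def hker (l : ℂ) : ℂ → ℂ := fun z => 1 / (1 - (starRingEnd ℂ) l * z)

/-- The normalized reproducing kernel `K_λ = k_λ / ‖k_λ‖_p`. -/
def hkerN (p : ℝ) (l : ℂ) : ℂ → ℂ := fun z => hker l z / (hNorm p (hker l) : ℂ)

/-- The arc of the unit circle starting at angle `a` of normalized length `ℓ`. -/
def cArc (a ℓ : ℝ) : Set ℂ :=
  (fun θ : ℝ => Complex.exp (θ * Complex.I)) '' Ico a (a + 2 * Real.pi * ℓ)

/-- The modified Carleson window `S_{I,h}` over the arc of normalized length `ℓ`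
starting at angle `a`, with radial depth `h`. -/
def cWindowH (a ℓ h : ℝ) : Set ℂ :=
  {z : ℂ | 1 - h ≤ ‖z‖ ∧ ‖z‖ ≤ 1 ∧ z / (‖z‖ : ℂ) ∈ cArc a ℓ}

/-- The Carleson window `S_I`. -/
def cWindow (a ℓ : ℝ) : Set ℂ := cWindowH a ℓ ℓ

/-- Normalized Lebesgue (arclength over `2π`) measure on the unit circle `∂𝔻`. -/
def circM : Measure ℂ :=
  (ENNReal.ofReal (1 / (2 * Real.pi))) •
    Measure.map (fun θ : ℝ => Complex.exp (θ * Complex.I))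
      (volume.restrict (Ico (0:ℝ) (2 * Real.pi)))

end

noncomputable section
/-- `φ_h(z) = (1/h) ∫_{S_{I,h}} (1-|λ|²)^{p-1} / |1 - conj(λ) z|^p dA(λ)`, where `dA` is
planar area (Lebesgue) measure and `I` is the arc at angle `a` of normalized length `ℓ`. -/
def cPhi (p a ℓ h : ℝ) (z : ℂ) : ℝ :=
  (1 / h) * ∫ l in cWindowH a ℓ h,
    (1 - ‖l‖ ^ 2) ^ (p - 1) / ‖1 - (starRingEnd ℂ) l * z‖ ^ p
end

/-!
Write `λ = r e^{iθ}`. Then `1 - |λ|² ≤ 2(1 - r)` and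
`|1 - conj(λ) z| ≥ max (1 - r) |sin ((arg z - θ) / 2)|`, so by Jordan's inequality
`|sin (θ / 2)| ≥ |θ| / π` the integral of the integrand over each circle `|λ| = r` is at most
`2^{p-1} (1 - r)^{p-1} · 2π ∫₀¹ max (1 - r, v)^{-p} dv ≤ 2^p π p / (p - 1)`, uniformly in `r`
and `z`. Enlarging `S_{I,h}` to the annulus `1 - h ≤ |λ| ≤ 1` and integrating in `r` in polar
coordinates bounds the area integral by `2^p π p / (p - 1) · h`.
-/

open scoped Real ENNReal

theorem norm_ofReal_mul_exp_mul_I (r θ : ℝ) : ‖(r : ℂ) * exp (θ * I)‖ = |r| := by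
  rw [norm_mul, norm_exp_ofReal_mul_I, mul_one, norm_real, Real.norm_eq_abs]

theorem max_one_sub_abs_sin_half_le_norm_one_sub {ρ : ℝ} (hρ0 : 0 ≤ ρ) (ψ : ℝ) :
    max (1 - ρ) |Real.sin (ψ / 2)| ≤ ‖1 - ρ * exp (ψ * I)‖ := by
  refine max_le ?_ ?_
  · have := norm_sub_norm_le (1 : ℂ) (ρ * exp (ψ * I))
    rwa [norm_one, norm_ofReal_mul_exp_mul_I, abs_of_nonneg hρ0] at this
  · have hsq : ‖1 - (ρ : ℂ) * exp (ψ * I)‖ ^ 2 = (1 - ρ) ^ 2 + 4 * ρ * Real.sin (ψ / 2) ^ 2 := by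
      rw [Complex.sq_norm, normSq_apply]
      have hcos := Real.cos_two_mul (ψ / 2)
      rw [mul_div_cancel₀ _ two_ne_zero] at hcos
      simp only [sub_re, one_re, mul_re, ofReal_re, exp_ofReal_mul_I_re, ofReal_im,
        exp_ofReal_mul_I_im, zero_mul, sub_zero, sub_im, one_im, mul_im, add_zero, zero_sub,
        mul_neg, neg_mul, neg_neg]
      nlinarith [Real.sin_sq_add_cos_sq ψ, Real.sin_sq_add_cos_sq (ψ / 2)]
    have hs := Real.sin_sq_le_one (ψ / 2)
    have : Real.sin (ψ / 2) ^ 2 ≤ ‖1 - (ρ : ℂ) * exp (ψ * I)‖ ^ 2 := by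
      rw [hsq]
      nlinarith [mul_nonneg (sq_nonneg (1 - ρ)) (sub_nonneg.2 hs),
        mul_nonneg (sq_nonneg (Real.sin (ψ / 2))) (by positivity : 0 ≤ ρ ^ 2 + 2 * ρ)]
    simpa using sq_le_sq.1 this

noncomputable def phiKernel (p : ℝ) (z l : ℂ) : ℝ :=
  (1 - ‖l‖ ^ 2) ^ (p - 1) / ‖1 - (starRingEnd ℂ) l * z‖ ^ p

theorem phiKernel_nonneg (p : ℝ) (z : ℂ) {l : ℂ} (hl : ‖l‖ ≤ 1) : 0 ≤ phiKernel p z l :=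
  div_nonneg (Real.rpow_nonneg (by nlinarith [norm_nonneg l]) _)
    (Real.rpow_nonneg (norm_nonneg _) _)

theorem conj_ofReal_mul_exp_mul_I_mul (r θ : ℝ) (z : ℂ) :
    (starRingEnd ℂ) (r * exp (θ * I)) * z = (r * ‖z‖ : ℝ) * exp ((arg z - θ : ℝ) * I) := by
  conv_lhs => rw [← norm_mul_exp_arg_mul_I z]
  rw [map_mul, conj_ofReal, ← exp_conj, map_mul, conj_ofReal, conj_I]
  push_cast
  rw [sub_mul, sub_eq_add_neg, exp_add]
  ring_nf

theorem phiKernel_ofReal_mul_exp_le {p : ℝ} (hp : 1 ≤ p) {z : ℂ} (hz : ‖z‖ ≤ 1) {r : ℝ}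
    (hr0 : 0 ≤ r) (hr1 : r < 1) (θ : ℝ) :
    phiKernel p z (r * exp (θ * I)) ≤
      (2 * (1 - r)) ^ (p - 1) * (max (1 - r) |Real.sin ((arg z - θ) / 2)|) ^ (-p) := by
  set m := max (1 - r) |Real.sin ((arg z - θ) / 2)|
  have hm : 0 < m := lt_max_of_lt_left (by linarith)
  have hden : m ≤ ‖1 - (starRingEnd ℂ) (r * exp (θ * I)) * z‖ := by
    rw [conj_ofReal_mul_exp_mul_I_mul]
    refine le_trans (max_le_max ?_ le_rfl)
      (max_one_sub_abs_sin_half_le_norm_one_sub (by positivity) _)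
    nlinarith [norm_nonneg z]
  have hnum : 0 ≤ 1 - ‖(r : ℂ) * exp (θ * I)‖ ^ 2 := by
    rw [norm_ofReal_mul_exp_mul_I, sq_abs]; nlinarith
  rw [phiKernel, Real.rpow_neg hm.le, ← div_eq_mul_inv]
  gcongr
  rw [norm_ofReal_mul_exp_mul_I, sq_abs]; nlinarith

theorem integral_max_rpow_neg_le {p δ b : ℝ} (hp : 1 < p) (hδ : 0 < δ) (hδb : δ ≤ b) :
    ∫ v in (0 : ℝ)..b, (max δ v) ^ (-p) ≤ p / (p - 1) * δ ^ (1 - p) := by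
  have hcont : Continuous fun v : ℝ => (max δ v) ^ (-p) :=
    (continuous_const.max continuous_id).rpow_const fun v => Or.inl (lt_max_of_lt_left hδ).ne'
  have hflat : ∫ v in (0 : ℝ)..δ, (max δ v) ^ (-p) = δ ^ (1 - p) := by
    rw [intervalIntegral.integral_congr (g := fun _ => δ ^ (-p)), intervalIntegral.integral_const,
      smul_eq_mul, sub_zero, ← Real.rpow_one_add' hδ.le (by linarith), ← sub_eq_add_neg]
    intro v hv
    rw [uIcc_of_le hδ.le] at hv
    simp only [max_eq_left hv.2]
  have htail : ∫ v in δ..b, (max δ v) ^ (-p) = (b ^ (1 - p) - δ ^ (1 - p)) / (1 - p) := by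
    rw [intervalIntegral.integral_congr (g := fun v => v ^ (-p)), integral_rpow, neg_add_eq_sub]
    · exact Or.inr ⟨by linarith, by rw [uIcc_of_le hδb]; exact fun h => by linarith [h.1]⟩
    · intro v hv
      rw [uIcc_of_le hδb] at hv
      simp only [max_eq_right hv.1]
  rw [← intervalIntegral.integral_add_adjacent_intervals (hcont.intervalIntegrable _ _)
    (hcont.intervalIntegrable _ _), hflat, htail]
  have hb : 0 ≤ b ^ (1 - p) := Real.rpow_nonneg (by linarith) _
  have hp1 : (1 : ℝ) - p ≠ 0 := by linarith
  calc δ ^ (1 - p) + (b ^ (1 - p) - δ ^ (1 - p)) / (1 - p)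
      = p / (p - 1) * δ ^ (1 - p) - b ^ (1 - p) / (p - 1) := by
        field_simp [sub_ne_zero.2 hp.ne']
        ring
    _ ≤ p / (p - 1) * δ ^ (1 - p) := sub_le_self _ (div_nonneg hb (by linarith))

theorem intervalIntegral.integral_comp_abs_of_continuous {f : ℝ → ℝ} (hf : Continuous f) {a : ℝ}
    (ha : 0 ≤ a) : ∫ x in -a..a, f |x| = 2 * ∫ x in (0 : ℝ)..a, f x := by
  have hfa : Continuous fun x => f |x| := hf.comp continuous_abs
  have hpos : ∫ x in (0 : ℝ)..a, f |x| = ∫ x in (0 : ℝ)..a, f x :=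
    intervalIntegral.integral_congr fun x hx => by
      rw [uIcc_of_le ha] at hx
      simp only [abs_of_nonneg hx.1]
  have hneg : ∫ x in -a..0, f |x| = ∫ x in (0 : ℝ)..a, f |x| := by
    simpa using (intervalIntegral.integral_comp_neg (a := 0) (b := a) fun x => f |x|).symm
  rw [← intervalIntegral.integral_add_adjacent_intervals (b := 0) (hfa.intervalIntegrable _ _)
    (hfa.intervalIntegrable _ _), hneg, hpos, two_mul]

theorem abs_div_pi_le_abs_sin_half {θ : ℝ} (hθ : |θ| ≤ π) : |θ| / π ≤ |Real.sin (θ / 2)| := by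
  have hjordan := Real.mul_le_sin (x := |θ| / 2) (by positivity) (by linarith)
  have hsin : Real.sin (|θ| / 2) ≤ |Real.sin (θ / 2)| := by
    rcases abs_choice θ with h | h <;> rw [h]
    · exact le_abs_self _
    · rw [neg_div, Real.sin_neg]; exact neg_le_abs _
  calc |θ| / π = 2 / π * (|θ| / 2) := by ring
    _ ≤ _ := hjordan.trans hsin

theorem integral_max_abs_sin_half_rpow_neg_le {p δ : ℝ} (hp : 1 < p) (hδ0 : 0 < δ) (hδ1 : δ ≤ 1)
    (c : ℝ) :
    ∫ θ in -π..π, (max δ |Real.sin ((c - θ) / 2)|) ^ (-p) ≤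
      2 * π * (p / (p - 1)) * δ ^ (1 - p) := by
  set F : ℝ → ℝ := fun θ => (max δ |Real.sin (θ / 2)|) ^ (-p)
  have hper : Function.Periodic F (2 * π) := fun θ => by
    simp only [F, add_div, mul_div_cancel_left₀ π two_ne_zero, Real.sin_add_pi, abs_neg]
  have hshift : ∫ θ in -π..π, F (c - θ) = ∫ θ in -π..π, F θ := by
    have := hper.intervalIntegral_add_eq (c - π) (-π)
    rw [show c - π + 2 * π = c - -π by ring, show -π + 2 * π = π by ring] at this
    rw [intervalIntegral.integral_comp_sub_left, this]
  have hpos : ∀ {x : ℝ}, 0 < max δ x := fun {_} => lt_max_of_lt_left hδ0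
  have hcompare : ∫ θ in -π..π, F θ ≤ ∫ θ in -π..π, (max δ (|θ| / π)) ^ (-p) := by
    refine intervalIntegral.integral_mono_on (by linarith [Real.pi_pos]) ?_ ?_ fun θ hθ => ?_
    · exact Continuous.intervalIntegrable ((continuous_const.max
        (continuous_abs.comp (Real.continuous_sin.comp (continuous_id.div_const _)))).rpow_const
        fun _ => Or.inl hpos.ne') _ _
    · exact Continuous.intervalIntegrable ((continuous_const.max
        (continuous_abs.div_const _)).rpow_const fun _ => Or.inl hpos.ne') _ _
    · exact Real.rpow_le_rpow_of_nonpos hpos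
        (max_le_max le_rfl (abs_div_pi_le_abs_sin_half (abs_le.2 hθ))) (by linarith)
  have hrescale :
      ∫ θ in -π..π, (max δ (|θ| / π)) ^ (-p) = π * ∫ v in (-1)..1, (max δ |v|) ^ (-p) := by
    have := intervalIntegral.integral_comp_div (fun v => (max δ |v|) ^ (-p)) Real.pi_pos.ne'
      (a := -π) (b := π)
    simp only [abs_div, abs_of_pos Real.pi_pos, neg_div, div_self Real.pi_pos.ne',
      smul_eq_mul] at this
    exact this
  calc ∫ θ in -π..π, (max δ |Real.sin ((c - θ) / 2)|) ^ (-p)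
      = ∫ θ in -π..π, F θ := hshift
    _ ≤ ∫ θ in -π..π, (max δ (|θ| / π)) ^ (-p) := hcompare
    _ = π * (2 * ∫ v in (0 : ℝ)..1, (max δ v) ^ (-p)) := by
        rw [hrescale, intervalIntegral.integral_comp_abs_of_continuous
          ((continuous_const.max continuous_id').rpow_const fun _ => Or.inl hpos.ne') zero_le_one]
    _ ≤ π * (2 * (p / (p - 1) * δ ^ (1 - p))) := by
        gcongr; exact integral_max_rpow_neg_le hp hδ0 hδ1
    _ = 2 * π * (p / (p - 1)) * δ ^ (1 - p) := by ring

theorem setLIntegral_phiKernel_circle_le {p : ℝ} (hp : 1 < p) {z : ℂ} (hz : ‖z‖ ≤ 1) {r : ℝ}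
    (hr0 : 0 ≤ r) (hr1 : r ≤ 1) :
    ∫⁻ θ in Ioo (-π) π, ENNReal.ofReal (phiKernel p z (r * exp (θ * I))) ≤
      ENNReal.ofReal (2 ^ p * π * (p / (p - 1))) := by
  rcases hr1.eq_or_lt with rfl | hr1
  · simp [phiKernel, norm_exp_ofReal_mul_I, Real.zero_rpow (by linarith : p - 1 ≠ 0)]
  set δ := 1 - r
  have hδ0 : 0 < δ := by linarith
  set B : ℝ → ℝ := fun θ => (2 * δ) ^ (p - 1) * (max δ |Real.sin ((arg z - θ) / 2)|) ^ (-p)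
  have hB : Continuous B := continuous_const.mul ((continuous_const.max (continuous_abs.comp
    (Real.continuous_sin.comp ((continuous_const.sub continuous_id).div_const _)))).rpow_const
      fun _ => Or.inl (lt_max_of_lt_left hδ0).ne')
  have hB0 : 0 ≤ᵐ[volume.restrict (Ioo (-π) π)] B := ae_of_all _ fun θ =>
    mul_nonneg (by positivity) (Real.rpow_nonneg (le_max_of_le_left hδ0.le) _)
  calc ∫⁻ θ in Ioo (-π) π, ENNReal.ofReal (phiKernel p z (r * exp (θ * I)))
      ≤ ∫⁻ θ in Ioo (-π) π, ENNReal.ofReal (B θ) := lintegral_mono fun θ =>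
        ENNReal.ofReal_le_ofReal (phiKernel_ofReal_mul_exp_le hp.le hz hr0 hr1 θ)
    _ = ENNReal.ofReal ((2 * δ) ^ (p - 1) *
          ∫ θ in -π..π, (max δ |Real.sin ((arg z - θ) / 2)|) ^ (-p)) := by
        rw [← ofReal_integral_eq_lintegral_ofReal (hB.integrableOn_Icc.mono_set Ioo_subset_Icc_self)
          hB0, ← integral_Ioc_eq_integral_Ioo, ← intervalIntegral.integral_of_le
          (by linarith [Real.pi_pos]), intervalIntegral.integral_const_mul]
    _ ≤ ENNReal.ofReal ((2 * δ) ^ (p - 1) * (2 * π * (p / (p - 1)) * δ ^ (1 - p))) := by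
        gcongr
        exact integral_max_abs_sin_half_rpow_neg_le hp hδ0 (by linarith) _
    _ = ENNReal.ofReal (2 ^ p * π * (p / (p - 1))) := by
        congr 1
        rw [Real.mul_rpow zero_le_two hδ0.le, show (1 : ℝ) - p = -(p - 1) by ring,
          Real.rpow_neg hδ0.le, Real.rpow_sub_one two_ne_zero]
        field_simp [(Real.rpow_pos_of_pos hδ0 (p - 1)).ne']

theorem lintegral_le_lintegral_polar (f : ℂ → ℝ≥0∞) :
    ∫⁻ z, f z ≤ ∫⁻ r in Ioi 0, ∫⁻ θ in Ioo (-π) π, ENNReal.ofReal r * f (r * exp (θ * I)) := by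
  rw [← Complex.lintegral_comp_polarCoord_symm, polarCoord_target, Measure.volume_eq_prod,
    ← Measure.prod_restrict]
  refine (lintegral_prod_le _).trans (le_of_eq ?_)
  simp [Complex.polarCoord_symm_apply, exp_mul_I, ← ofReal_cos, ← ofReal_sin]

theorem setLIntegral_phiKernel_annulus_le {p : ℝ} (hp : 1 < p) {z : ℂ} (hz : ‖z‖ ≤ 1) (h : ℝ) :
    ∫⁻ l in closedBall 0 1 \ ball 0 (1 - h), ENNReal.ofReal (phiKernel p z l) ≤
      ENNReal.ofReal (2 ^ p * π * (p / (p - 1)) * h) := by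
  set K := 2 ^ p * π * (p / (p - 1))
  set A : Set ℂ := closedBall 0 1 \ ball 0 (1 - h)
  have hmemA {r : ℝ} (hr : 0 < r) (θ : ℝ) : (r : ℂ) * exp (θ * I) ∈ A ↔ r ∈ Icc (1 - h) 1 := by
    simp [A, abs_of_pos hr, and_comm]
  have hradial : ∀ r ∈ Ioi (0 : ℝ),
      ∫⁻ θ in Ioo (-π) π, ENNReal.ofReal r * A.indicator (fun l => ENNReal.ofReal (phiKernel p z l))
        (r * exp (θ * I)) ≤ (Icc (1 - h) 1).indicator (fun _ => ENNReal.ofReal K) r := by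
    intro r hr
    by_cases hrI : r ∈ Icc (1 - h) 1
    · rw [indicator_of_mem hrI]
      refine le_trans (lintegral_mono fun θ => ?_)
        (setLIntegral_phiKernel_circle_le hp hz (le_of_lt hr) hrI.2)
      rw [indicator_of_mem ((hmemA hr θ).2 hrI)]
      exact mul_le_of_le_one_left' (ENNReal.ofReal_le_one.2 hrI.2)
    · simp [indicator_of_notMem hrI, indicator_of_notMem (mt (hmemA hr _).1 hrI)]
  rw [← lintegral_indicator (measurableSet_closedBall.diff measurableSet_ball)]
  calc ∫⁻ l, A.indicator (fun l => ENNReal.ofReal (phiKernel p z l)) l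
      ≤ ∫⁻ r in Ioi 0, (Icc (1 - h) 1).indicator (fun _ => ENNReal.ofReal K) r :=
        (lintegral_le_lintegral_polar _).trans (setLIntegral_mono' measurableSet_Ioi hradial)
    _ ≤ ∫⁻ r, (Icc (1 - h) 1).indicator (fun _ => ENNReal.ofReal K) r :=
        setLIntegral_le_lintegral _ _
    _ = ENNReal.ofReal (K * h) := by
        rw [lintegral_indicator_const measurableSet_Icc, Real.volume_Icc, sub_sub_cancel,
          ← ENNReal.ofReal_mul (by positivity)]

theorem setIntegral_phiKernel_cWindowH_le {p : ℝ} (hp : 1 < p) {z : ℂ} (hz : ‖z‖ ≤ 1)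
    (a ℓ h : ℝ) (hh : 0 ≤ h) :
    ∫ l in cWindowH a ℓ h, phiKernel p z l ≤ 2 ^ p * π * (p / (p - 1)) * h := by
  have hwindow : cWindowH a ℓ h ⊆ closedBall 0 1 \ ball 0 (1 - h) := fun l hl =>
    ⟨mem_closedBall_zero_iff.2 hl.2.1, by simpa using hl.1⟩
  rw [← ENNReal.ofReal_le_ofReal_iff (by positivity)]
  calc ENNReal.ofReal (∫ l in cWindowH a ℓ h, phiKernel p z l)
      ≤ ∫⁻ l in cWindowH a ℓ h, ‖phiKernel p z l‖ₑ :=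
        (ENNReal.ofReal_le_ofReal (le_abs_self _)).trans
          ((Real.enorm_eq_ofReal_abs _).symm.trans_le (enorm_integral_le_lintegral_enorm _))
    _ ≤ ∫⁻ l in closedBall 0 1 \ ball 0 (1 - h), ‖phiKernel p z l‖ₑ := lintegral_mono_set hwindow
    _ = ∫⁻ l in closedBall 0 1 \ ball 0 (1 - h), ENNReal.ofReal (phiKernel p z l) :=
        setLIntegral_congr_fun (measurableSet_closedBall.diff measurableSet_ball) fun l hl =>
          Real.enorm_of_nonneg (phiKernel_nonneg p z (mem_closedBall_zero_iff.1 hl.1))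
    _ ≤ ENNReal.ofReal (2 ^ p * π * (p / (p - 1)) * h) := setLIntegral_phiKernel_annulus_le hp hz h

/-- Uniform upper bound: there is `C > 0` depending only on `p` such that `φ_h(z) ≤ C`
for every arc `I`, every `h > 0` and every `z` in the closed unit disk. -/
theorem phi_uniform_upper_bound (p : ℝ) (hp : 1 < p) :
    ∃ C > (0:ℝ), ∀ a ℓ h : ℝ, 0 < ℓ → ℓ ≤ 1 → 0 < h →
      ∀ z ∈ closedBall (0:ℂ) 1, cPhi p a ℓ h z ≤ C := by
  refine ⟨2 ^ p * π * (p / (p - 1)), by positivity, fun a ℓ h _ _ hh z hz => ?_⟩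
  calc cPhi p a ℓ h z = h⁻¹ * ∫ l in cWindowH a ℓ h, phiKernel p z l := by
        rw [cPhi, one_div]; rfl
    _ ≤ h⁻¹ * (2 ^ p * π * (p / (p - 1)) * h) := by
        gcongr
        exact setIntegral_phiKernel_cWindowH_le hp (mem_closedBall_zero_iff.1 hz) a ℓ h hh.le
    _ = 2 ^ p * π * (p / (p - 1)) := by field_simp
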